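/- Let V, W ∈ ℂ[X], ħ a nonzero complex number, I ⊆ ℝ an interval, and s : I → ℂ^m a differentiable map whose coordinates s_1(t),…,s_m(t) are pairwise distinct for every t ∈ I, satisfying for all t ∈ I and all i the deformed Bethe equations V′(s_i(t)) + t·W′(s_i(t)) = 2ħ ∑_{j≠i} 1/(s_i(t) − s_j(t)). Then for all t ∈ I and all i: W′(s_i(t)) = −ħ ∑_{j=1}^m T_{ij}(t) · s_j′(t), where T(t) is the Hessian matrix of the potential V + tW at the points s(t): T_{ii}(t) = (1/ħ)(V″ + tW″)(s_i(t)) + 2∑_{j≠i} 1/(s_i(t) − s_j(t))², T_{ij}(t) = −2/(s_i(t) − s_j(t))² for i ≠ j. -/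

import Mathlib

/-!
The deformed Bethe equations say that `F i (t) := (V′ + t W′)(s i) − 2ħ ∑_{j≠i} 1/(s i − s j)`
vanishes on the interval `I`. Since `I` is a nontrivial interval, derivatives within `I` are unique,
so `F i` has derivative zero there. Differentiating `F i` by the chain rule gives
`(V″ + t W″)(s i) s′ i + W′(s i) + 2ħ ∑_{j≠i} (s′ i − s′ j)/(s i − s j)² = 0`, and the left-hand
side, minus `W′(s i)`, is exactly `ħ (T s′) i`.
-/

open Finset Polynomial

/-- The Hessian matrix `T` of the paper: `T i i = (1/ħ) vpp i + 2 ∑_{k≠i} 1/(σ i − σ k)²`,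
`T i j = −2/(σ i − σ j)²` for `i ≠ j`; here `vpp i` is the second derivative of the
potential evaluated at `σ i`. -/
noncomputable def hessianT (m : ℕ) (hbar : ℂ) (vpp : Fin m → ℂ) (σ : Fin m → ℂ) :
    Matrix (Fin m) (Fin m) ℂ :=
  Matrix.of fun i j =>
    if i = j then (1 / hbar) * vpp i + 2 * ∑ k ∈ univ.erase i, 1 / (σ i - σ k) ^ 2
    else -2 / (σ i - σ j) ^ 2

theorem sum_hessianT_mul (m : ℕ) (hbar : ℂ) (vpp σ v : Fin m → ℂ) (i : Fin m) :
    ∑ j, hessianT m hbar vpp σ i j * v j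
      = 1 / hbar * vpp i * v i + 2 * ∑ j ∈ univ.erase i, (v i - v j) / (σ i - σ j) ^ 2 := by
  have hdiag : hessianT m hbar vpp σ i i
      = 1 / hbar * vpp i + 2 * ∑ j ∈ univ.erase i, 1 / (σ i - σ j) ^ 2 := by
    simp [hessianT]
  have hoff : ∀ j ∈ univ.erase i, hessianT m hbar vpp σ i j * v j = -2 / (σ i - σ j) ^ 2 * v j :=
    fun j hj => by simp [hessianT, (ne_of_mem_erase hj).symm]
  have hsplit : 2 * ∑ j ∈ univ.erase i, (v i - v j) / (σ i - σ j) ^ 2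
      = 2 * (∑ j ∈ univ.erase i, 1 / (σ i - σ j) ^ 2) * v i
        + ∑ j ∈ univ.erase i, -2 / (σ i - σ j) ^ 2 * v j := by
    rw [mul_sum, mul_sum, sum_mul, ← sum_add_distrib]
    exact sum_congr rfl fun j _ => by ring
  rw [← add_sum_erase _ _ (mem_univ i), sum_congr rfl hoff, hdiag, hsplit]
  ring

section

variable {ι : Type*} [Fintype ι] [DecidableEq ι] {s : ℝ → ι → ℂ} {s' : ι → ℂ} {I : Set ℝ} {t : ℝ}

theorem hasDerivWithinAt_sum_one_div_sub (hs : ∀ j, HasDerivWithinAt (fun τ => s τ j) (s' j) I t)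
    (i : ι) (hdist : ∀ j, i ≠ j → s t i ≠ s t j) :
    HasDerivWithinAt (fun τ => ∑ j ∈ univ.erase i, 1 / (s τ i - s τ j))
      (-∑ j ∈ univ.erase i, (s' i - s' j) / (s t i - s t j) ^ 2) I t := by
  simp only [one_div, ← sum_neg_distrib, ← neg_div]
  exact HasDerivWithinAt.fun_sum fun j hj =>
    ((hs i).sub (hs j)).fun_inv (sub_ne_zero.2 (hdist j (ne_of_mem_erase hj).symm))

theorem deformed_bethe_deriv_eq_zero {V W : ℂ[X]} {hbar : ℂ} (hu : UniqueDiffWithinAt ℝ I t)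
    (ht : t ∈ I) (hs : ∀ j, HasDerivWithinAt (fun τ => s τ j) (s' j) I t) (i : ι)
    (hdist : ∀ j, i ≠ j → s t i ≠ s t j)
    (hBethe : ∀ τ ∈ I, V.derivative.eval (s τ i) + (τ : ℂ) * W.derivative.eval (s τ i)
        = 2 * hbar * ∑ j ∈ univ.erase i, 1 / (s τ i - s τ j)) :
    (V.derivative.derivative.eval (s t i) + (t : ℂ) * W.derivative.derivative.eval (s t i)) * s' i
      + W.derivative.eval (s t i)
      + 2 * hbar * ∑ j ∈ univ.erase i, (s' i - s' j) / (s t i - s t j) ^ 2 = 0 := by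
  have hV := (V.derivative.hasDerivAt (s t i)).comp_hasDerivWithinAt t (hs i)
  have hW := (W.derivative.hasDerivAt (s t i)).comp_hasDerivWithinAt t (hs i)
  have hres := (hV.add ((hasDerivAt_id t).ofReal_comp.hasDerivWithinAt.mul hW)).sub
    ((hasDerivWithinAt_sum_one_div_sub hs i hdist).const_mul (2 * hbar))
  have hzero := (hasDerivWithinAt_const t I (0 : ℂ)).congr
    (fun τ hτ => sub_eq_zero.2 (hBethe τ hτ)) (sub_eq_zero.2 (hBethe t ht))
  rw [← hu.eq_deriv _ hres hzero]
  simp only [Function.comp_apply, id, Complex.ofReal_one]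
  ring

end

theorem deformed_bethe_roots_velocity (m : ℕ) (hbar : ℂ) (hhbar : hbar ≠ 0)
    (V W : Polynomial ℂ) (I : Set ℝ) (hI : I.OrdConnected) (hInontriv : I.Nontrivial)
    (s s' : ℝ → Fin m → ℂ)
    (hdiff : ∀ t ∈ I, ∀ i, HasDerivWithinAt (fun τ => s τ i) (s' t i) I t)
    (hdist : ∀ t ∈ I, ∀ i j, i ≠ j → s t i ≠ s t j)
    (hBethe : ∀ t ∈ I, ∀ i,
      V.derivative.eval (s t i) + (t : ℂ) * W.derivative.eval (s t i)
        = 2 * hbar * ∑ j ∈ univ.erase i, 1 / (s t i - s t j)) :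
    ∀ t ∈ I, ∀ i,
      W.derivative.eval (s t i)
        = -hbar * ∑ j, hessianT m hbar
            (fun k => V.derivative.derivative.eval (s t k)
              + (t : ℂ) * W.derivative.derivative.eval (s t k)) (s t) i j * s' t j := by
  intro t ht i
  have hu : UniqueDiffWithinAt ℝ I t :=
    uniqueDiffOn_convex hI.convex (hI.convex.nontrivial_iff_nonempty_interior.1 hInontriv) t ht
  have hderiv := deformed_bethe_deriv_eq_zero hu ht (hdiff t ht) i (hdist t ht i)
    fun τ hτ => hBethe τ hτ i
  rw [sum_hessianT_mul]
  field_simp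
  linear_combination hderiv
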